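/- arXiv:1308.4250 — 3 statements merged into one kernel-verified Lean document; each statement's English description precedes it below -/
import Mathlib

section
/- The localizations of x satisfy the relation x_s² = x_{s0} ∘ x_s ∘ x_{s1} for every finite binary sequence s (composition left-to-right, so ξ.(x_s²) = ((ξ.x_{s0}).x_s).x_{s1}). -/
lemma take_len_append (l : List Bool) (s : Stream' Bool) :
    Stream'.take l.length (Stream'.appendStream' l s) = l := by
  induction l with
  | nil => rfl
  | cons a l ih =>
      rw [Stream'.cons_append_stream, List.length_cons, Stream'.take_succ,
        Stream'.head_cons, Stream'.tail_cons, ih]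

/-- The localization of a map `f` of `2^ℕ` at a finite binary sequence `s`. -/
def loc (s : List Bool) (f : Stream' Bool → Stream' Bool) (ξ : Stream' Bool) : Stream' Bool :=
  if Stream'.take s.length ξ = s then
    Stream'.appendStream' s (f (Stream'.drop s.length ξ))
  else ξ

lemma loc_append (l : List Bool) (f : Stream' Bool → Stream' Bool) (η : Stream' Bool) :
    loc l f (Stream'.appendStream' l η) = Stream'.appendStream' l (f η) := by
  simp [loc, take_len_append, Stream'.drop_append_stream]

lemma loc_not (l : List Bool) (f : Stream' Bool → Stream' Bool) (ξ : Stream' Bool)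
    (h : Stream'.take l.length ξ ≠ l) : loc l f ξ = ξ := if_neg h

lemma snoc_append (s : List Bool) (b : Bool) (μ : Stream' Bool) :
    Stream'.appendStream' s (Stream'.cons b μ) = Stream'.appendStream' (s ++ [b]) μ := by
  rw [Stream'.append_append_stream, Stream'.cons_append_stream, Stream'.nil_append_stream]

lemma loc_snoc_match (s : List Bool) (b : Bool) (f : Stream' Bool → Stream' Bool)
    (η : Stream' Bool) :
    loc (s ++ [b]) f (Stream'.appendStream' s (Stream'.cons b η)) =
      Stream'.appendStream' s (Stream'.cons b (f η)) := by
  rw [snoc_append, snoc_append, loc_append]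

lemma loc_snoc_miss (s : List Bool) (b c : Bool) (hbc : b ≠ c)
    (f : Stream' Bool → Stream' Bool) (η : Stream' Bool) :
    loc (s ++ [b]) f (Stream'.appendStream' s (Stream'.cons c η)) =
      Stream'.appendStream' s (Stream'.cons c η) := by
  apply loc_not
  rw [snoc_append]
  have hlen : (s ++ [b]).length = (s ++ [c]).length := by simp
  rw [hlen, take_len_append]
  intro hc
  simp at hc
  exact hbc hc.symm

lemma loc_snoc_not (s : List Bool) (b : Bool) (f : Stream' Bool → Stream' Bool)
    (ξ : Stream' Bool) (h : Stream'.take s.length ξ ≠ s) :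
    loc (s ++ [b]) f ξ = ξ := by
  apply loc_not
  intro hc
  apply h
  have h1 : (Stream'.take (s ++ [b]).length ξ).take s.length = Stream'.take s.length ξ := by
    rw [Stream'.take_take]
    congr 1
    simp
  rw [← h1, hc]
  simp [List.take_left]

/-- x_s² = x_{s0} · x_s · x_{s1}, i.e. ξ.(x_s²) = ((ξ.x_{s0}).x_s).x_{s1}. -/
theorem x_basic_relation
    (x : Stream' Bool → Stream' Bool)
    (hx00 : ∀ η, x (Stream'.cons false (Stream'.cons false η)) = Stream'.cons false η)
    (hx01 : ∀ η, x (Stream'.cons false (Stream'.cons true η)) =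
      Stream'.cons true (Stream'.cons false η))
    (hx1 : ∀ η, x (Stream'.cons true η) =
      Stream'.cons true (Stream'.cons true η))
    (s : List Bool) :
    ∀ ξ : Stream' Bool,
      loc s x (loc s x ξ) =
        loc (s ++ [true]) x (loc s x (loc (s ++ [false]) x ξ)) := by
  intro ξ
  by_cases h : Stream'.take s.length ξ = s
  · obtain ⟨η, rfl⟩ : ∃ η, ξ = Stream'.appendStream' s η := by
      refine ⟨Stream'.drop s.length ξ, ?_⟩
      have h2 := Stream'.append_take_drop s.length ξ
      rw [h] at h2
      exact h2.symm
    clear h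
    obtain ⟨b0, η, rfl⟩ : ∃ b η', η = Stream'.cons b η' :=
      ⟨η.head, η.tail, (Stream'.eta η).symm⟩
    cases b0 with
    | true =>
        simp [loc_snoc_match, loc_append, hx1, loc_snoc_miss s false true (by simp)]
    | false =>
        obtain ⟨b1, η, rfl⟩ : ∃ b η', η = Stream'.cons b η' :=
          ⟨η.head, η.tail, (Stream'.eta η).symm⟩
        cases b1 with
        | true =>
            simp [loc_snoc_match, loc_append, hx00, hx01, hx1]
        | false =>
            obtain ⟨b2, η, rfl⟩ : ∃ b η', η = Stream'.cons b η' :=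
              ⟨η.head, η.tail, (Stream'.eta η).symm⟩
            cases b2 with
            | true =>
                simp [loc_snoc_match, loc_append, hx00, hx01]
            | false =>
                simp [loc_snoc_match, loc_append, hx00,
                  loc_snoc_miss s true false (by simp)]
  · rw [loc_snoc_not s false x ξ h, loc_not s x ξ h, loc_not s x ξ h,
      loc_snoc_not s true x ξ h]
end

section
/- Under the identification Φ, the bijection x of 2^ℕ corresponds to translation by 1: for every infinite binary sequence ξ, Φ(ξ) + 1 = Φ(x(ξ)), where ∞ + 1 = ∞. -/
/-!
The content is the identity `φ (map not ξ) = (φ ξ)⁻¹`; granted it, each of the three clauses of `x`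
shifts `Φ` by one through a direct computation, the clause `01η ↦ 10η` reducing to
`(1 + a⁻¹)⁻¹ + (1 + a)⁻¹ = 1`.

The map `ξ ↦ (φ (map not ξ))⁻¹` obeys the same recursion `φ (b :: ξ) = step b (φ ξ)` as `φ`, so
the identity follows from uniqueness of solutions. On fractions `a / c` the two steps act by
Stern–Brocot moves on `(a, c)`, which preserve the determinant of a pair. If `ξ = w ++ false :: ζ`,
then `φ ξ` lies between the images under `w` of `0 / 1` and `1 / 1` (as `φ (false :: ζ) ≤ 1`);
these are Farey neighbours, and the denominator of the second exceeds the number of `false`s in `w`.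
So two solutions agree to within `1 / k` for every `k` on a stream with infinitely many `false`s,
while on `w ++ true^ω` both equal `w` applied to `⊤`.
-/

open ENNReal OnePoint

theorem Stream'.take_append_cons_get_drop {α : Type*} (ξ : Stream' α) (n : ℕ) :
    ξ.take n ++ₛ Stream'.cons (ξ.get n) (ξ.drop (n + 1)) = ξ := by
  conv_rhs => rw [← Stream'.append_take_drop n ξ, ← Stream'.eta (ξ.drop n)]
  rw [Stream'.head_drop, Stream'.tail_drop']

theorem Stream'.exists_get_eq_le_count_take {α : Type*} [DecidableEq α] {ξ : Stream' α} {a : α}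
    (h : ∀ N, ∃ n, N ≤ n ∧ ξ.get n = a) (k : ℕ) :
    ∃ n, ξ.get n = a ∧ k ≤ (ξ.take n).count a := by
  induction k with
  | zero =>
    obtain ⟨n, -, hn⟩ := h 0
    exact ⟨n, hn, Nat.zero_le _⟩
  | succ k ih =>
    obtain ⟨n, hn, hk⟩ := ih
    obtain ⟨m, hnm, hm⟩ := h (n + 1)
    have hcount : (ξ.take (n + 1)).count a = (ξ.take n).count a + 1 := by
      simp [Stream'.take_succ', hn]
    have hmono := (Stream'.take_prefix_take_left _ _ ξ hnm).sublist.count_le a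
    exact ⟨m, hm, by omega⟩

theorem ENNReal.one_add_div {a c : ℝ≥0∞} (hc : c ≠ ⊤) (h : a ≠ 0 ∨ c ≠ 0) :
    1 + a / c = (c + a) / c := by
  rcases eq_or_ne c 0 with rfl | hc0
  · simp [ENNReal.div_zero (h.resolve_right (not_not.2 rfl))]
  · rw [ENNReal.add_div, ENNReal.div_self hc0 hc]

theorem ENNReal.le_of_forall_le_add_inv_natCast {a b : ℝ≥0∞}
    (h : ∀ n : ℕ, a ≤ b + (n : ℝ≥0∞)⁻¹) : a ≤ b := by
  refine ge_of_tendsto' (x := Filter.atTop) ?_ h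
  simpa using tendsto_const_nhds.add ENNReal.tendsto_inv_nat_nhds_zero

theorem ENNReal.inv_one_add_inv_add_inv_one_add (a : ℝ≥0∞) :
    (1 + a⁻¹)⁻¹ + (1 + a)⁻¹ = 1 := by
  rcases eq_or_ne a 0 with rfl | h0
  · simp
  rcases eq_or_ne a ⊤ with rfl | ht
  · simp
  have h : 1 + a⁻¹ = (1 + a) * a⁻¹ := by
    rw [add_mul, one_mul, ENNReal.mul_inv_cancel h0 ht, add_comm]
  rw [h, ENNReal.mul_inv (by simp) (by simp [ht]), inv_inv, ← mul_add_one, add_comm a,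
    ENNReal.inv_mul_cancel (by simp) (by simp [ht])]

namespace SternBrocot

noncomputable def step : Bool → ℝ≥0∞ → ℝ≥0∞
  | false, t => (1 + t⁻¹)⁻¹
  | true, t => 1 + t

theorem step_mono (b : Bool) : Monotone (step b) := by
  intro s t hst
  cases b
  · exact ENNReal.inv_le_inv.2 (add_le_add_right (ENNReal.inv_le_inv.2 hst) 1)
  · exact add_le_add_right hst 1

theorem foldr_step_mono (w : List Bool) : Monotone (w.foldr step) := by
  induction w with
  | nil => exact monotone_id
  | cons b w ih => exact (step_mono b).comp ih

theorem inv_step_not (b : Bool) (t : ℝ≥0∞) : (step (!b) t)⁻¹ = step b t⁻¹ := by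
  cases b <;> simp [step]

theorem step_false_le_one (t : ℝ≥0∞) : step false t ≤ 1 :=
  ENNReal.inv_le_one.2 le_self_add

noncomputable def frac (v : ℕ × ℕ) : ℝ≥0∞ := v.1 / v.2

def fracStep : Bool → ℕ × ℕ → ℕ × ℕ
  | false, (a, c) => (a, a + c)
  | true, (a, c) => (a + c, c)

theorem le_fracStep (b : Bool) (v : ℕ × ℕ) : v ≤ fracStep b v := by
  cases b <;> exact ⟨by simp [fracStep], by simp [fracStep]⟩

theorem le_foldr_fracStep (w : List Bool) (v : ℕ × ℕ) : v ≤ w.foldr fracStep v := by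
  induction w with
  | nil => exact le_rfl
  | cons b w ih => exact ih.trans (le_fracStep b _)

theorem step_frac (b : Bool) {v : ℕ × ℕ} (hv : v ≠ 0) :
    step b (frac v) = frac (fracStep b v) := by
  obtain ⟨a, c⟩ := v
  have hac : (a : ℝ≥0∞) ≠ 0 ∨ (c : ℝ≥0∞) ≠ 0 := by
    by_contra! h
    exact hv (by simp_all)
  cases b
  · simp only [step, frac, fracStep, Nat.cast_add]
    rw [ENNReal.inv_div (by simp) hac.symm, ENNReal.one_add_div (by simp) hac.symm,
      ENNReal.inv_div (by simp) (by rcases hac with h | h <;> simp [h])]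
  · simp only [step, frac, fracStep, Nat.cast_add]
    rw [ENNReal.one_add_div (by simp) hac, add_comm]

theorem foldr_step_frac (w : List Bool) {v : ℕ × ℕ} (hv : v ≠ 0) :
    w.foldr step (frac v) = frac (w.foldr fracStep v) := by
  induction w with
  | nil => rfl
  | cons b w ih =>
    have hw : w.foldr fracStep v ≠ 0 := fun h =>
      hv (le_antisymm (h ▸ le_foldr_fracStep w v) zero_le)
    rw [List.foldr_cons, List.foldr_cons, ih, step_frac b hw]

theorem fracStep_det (b : Bool) {u v : ℕ × ℕ} (h : u.1 * v.2 = v.1 * u.2 + 1) :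
    (fracStep b u).1 * (fracStep b v).2 = (fracStep b v).1 * (fracStep b u).2 + 1 := by
  obtain ⟨a, c⟩ := u
  obtain ⟨a', c'⟩ := v
  cases b <;> simp only [fracStep] at h ⊢ <;> linear_combination h

theorem foldr_fracStep_det (w : List Bool) {u v : ℕ × ℕ} (h : u.1 * v.2 = v.1 * u.2 + 1) :
    (w.foldr fracStep u).1 * (w.foldr fracStep v).2 =
      (w.foldr fracStep v).1 * (w.foldr fracStep u).2 + 1 := by
  induction w with
  | nil => exact h
  | cons b w ih => exact fracStep_det b ih

theorem count_false_lt_foldr_fracStep (w : List Bool) :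
    w.count false < (w.foldr fracStep (1, 1)).2 := by
  induction w with
  | nil => simp
  | cons b w ih =>
    have h1 : 1 ≤ (w.foldr fracStep (1, 1)).1 := (le_foldr_fracStep w (1, 1)).1
    cases b
    · rw [List.count_cons_self, List.foldr_cons, fracStep]
      omega
    · rw [List.count_cons_of_ne (by decide), List.foldr_cons, fracStep]
      exact ih

theorem frac_le_frac_add_inv {u v : ℕ × ℕ} (h : u.1 * v.2 = v.1 * u.2 + 1) :
    frac u ≤ frac v + (u.2 : ℝ≥0∞)⁻¹ := by
  obtain ⟨a, b⟩ := u
  obtain ⟨c, d⟩ := v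
  simp only [frac] at h ⊢
  have hd : d ≠ 0 := by
    rintro rfl
    simp at h
  rcases eq_or_ne b 0 with rfl | hb
  · simp
  have hd' : (d : ℝ≥0∞) ≠ 0 := by exact_mod_cast hd
  have hb' : (b : ℝ≥0∞) ≠ 0 := by exact_mod_cast hb
  calc (a : ℝ≥0∞) / b = (a * d : ℕ) / (b * d : ℕ) := by
        push_cast
        rw [ENNReal.mul_div_mul_right _ _ hd' (natCast_ne_top d)]
    _ = c / d + ((b : ℝ≥0∞) * d)⁻¹ := by
        rw [h]
        push_cast
        rw [ENNReal.add_div, one_div, mul_comm (c : ℝ≥0∞),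
          ENNReal.mul_div_mul_left _ _ hb' (natCast_ne_top b)]
    _ ≤ c / d + (b : ℝ≥0∞)⁻¹ := by
        gcongr
        exact_mod_cast Nat.le_mul_of_pos_right b (Nat.pos_of_ne_zero hd)

def SatisfiesStep (φ : Stream' Bool → ℝ≥0∞) : Prop :=
  ∀ b ξ, φ (Stream'.cons b ξ) = step b (φ ξ)

namespace SatisfiesStep

variable {φ ψ : Stream' Bool → ℝ≥0∞}

theorem apply_append_stream (hφ : SatisfiesStep φ) (w : List Bool) (ζ : Stream' Bool) :
    φ (w ++ₛ ζ) = w.foldr step (φ ζ) := by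
  induction w with
  | nil => rfl
  | cons b w ih => rw [Stream'.cons_append_stream, hφ, ih, List.foldr_cons]

theorem apply_const_true (hφ : SatisfiesStep φ) : φ (Stream'.const true) = ⊤ := by
  have h : φ (Stream'.const true) = 1 + φ (Stream'.const true) := by
    conv_lhs => rw [Stream'.const_eq, hφ]
    rfl
  by_contra htop
  simpa using (ENNReal.add_left_inj htop).1 (h.symm.trans (zero_add _).symm)

theorem le_apply_add_inv_count (hφ : SatisfiesStep φ) (hψ : SatisfiesStep ψ) (w : List Bool)
    (ζ ζ' : Stream' Bool) :
    φ (w ++ₛ Stream'.cons false ζ) ≤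
      ψ (w ++ₛ Stream'.cons false ζ') + (w.count false : ℝ≥0∞)⁻¹ :=
  calc φ (w ++ₛ Stream'.cons false ζ) = w.foldr step (step false (φ ζ)) := by
        rw [hφ.apply_append_stream, hφ]
    _ ≤ w.foldr step (frac (1, 1)) :=
        foldr_step_mono w ((step_false_le_one _).trans (by simp [frac]))
    _ = frac (w.foldr fracStep (1, 1)) := foldr_step_frac w (by simp)
    _ ≤ frac (w.foldr fracStep (0, 1)) + ((w.foldr fracStep (1, 1)).2 : ℝ≥0∞)⁻¹ :=
        frac_le_frac_add_inv (foldr_fracStep_det w (by simp))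
    _ ≤ ψ (w ++ₛ Stream'.cons false ζ') + (w.count false : ℝ≥0∞)⁻¹ := by
        gcongr
        · rw [← foldr_step_frac w (by simp), hψ.apply_append_stream]
          exact foldr_step_mono w (by simp [frac])
        · exact_mod_cast (count_false_lt_foldr_fracStep w).le

theorem apply_le_of_frequently_false (hφ : SatisfiesStep φ) (hψ : SatisfiesStep ψ)
    {ξ : Stream' Bool} (h : ∀ N, ∃ n, N ≤ n ∧ ξ.get n = false) : φ ξ ≤ ψ ξ := by
  refine ENNReal.le_of_forall_le_add_inv_natCast fun k => ?_
  obtain ⟨n, hn, hk⟩ := Stream'.exists_get_eq_le_count_take h k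
  have hξ : ξ.take n ++ₛ Stream'.cons false (ξ.drop (n + 1)) = ξ := by
    rw [← hn, Stream'.take_append_cons_get_drop]
  calc φ ξ ≤ ψ ξ + ((ξ.take n).count false : ℝ≥0∞)⁻¹ := by
        simpa only [hξ] using
          le_apply_add_inv_count hφ hψ (ξ.take n) (ξ.drop (n + 1)) (ξ.drop (n + 1))
    _ ≤ ψ ξ + (k : ℝ≥0∞)⁻¹ := by gcongr

theorem apply_eq_of_eventually_true (hφ : SatisfiesStep φ) (hψ : SatisfiesStep ψ)
    {ξ : Stream' Bool} (h : ∃ N, ∀ n, N ≤ n → ξ.get n = true) : φ ξ = ψ ξ := by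
  obtain ⟨N, hN⟩ := h
  have htail : ξ.drop N = Stream'.const true := Stream'.ext fun n => by
    rw [Stream'.get_drop, Stream'.get_const, hN _ (Nat.le_add_right _ _)]
  rw [← Stream'.append_take_drop N ξ, htail, hφ.apply_append_stream, hψ.apply_append_stream,
    hφ.apply_const_true, hψ.apply_const_true]

theorem unique (hφ : SatisfiesStep φ) (hψ : SatisfiesStep ψ) : φ = ψ := by
  funext ξ
  by_cases h : ∃ N, ∀ n, N ≤ n → ξ.get n = true
  · exact apply_eq_of_eventually_true hφ hψ h
  · have h' : ∀ N, ∃ n, N ≤ n ∧ ξ.get n = false := by simpa using h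
    exact le_antisymm (apply_le_of_frequently_false hφ hψ h')
      (apply_le_of_frequently_false hψ hφ h')

theorem inv_comp_map_not (hφ : SatisfiesStep φ) :
    SatisfiesStep fun ξ => (φ (ξ.map not))⁻¹ := by
  intro b ξ
  dsimp only
  rw [Stream'.map_cons, hφ, inv_step_not]

theorem apply_map_not (hφ : SatisfiesStep φ) (ξ : Stream' Bool) :
    φ (ξ.map not) = (φ ξ)⁻¹ := by
  rw [← congrFun (hφ.inv_comp_map_not.unique hφ) ξ, inv_inv]

end SatisfiesStep

end SternBrocot

noncomputable def ENNReal.toOnePoint (t : ℝ≥0∞) : OnePoint ℝ :=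
  if t = ⊤ then ∞ else (t.toReal : OnePoint ℝ)

theorem ENNReal.toOnePoint_of_ne_top {t : ℝ≥0∞} (ht : t ≠ ⊤) : t.toOnePoint = t.toReal :=
  if_neg ht

theorem ENNReal.toOnePoint_one_add (t : ℝ≥0∞) :
    (1 + t).toOnePoint = t.toOnePoint.map (· + 1) := by
  rcases eq_or_ne t ⊤ with rfl | ht
  · simp [toOnePoint]
  · rw [toOnePoint_of_ne_top ht, toOnePoint_of_ne_top (by simp [ht]), OnePoint.map_some,
      toReal_add one_ne_top ht, toReal_one, add_comm]

theorem ENNReal.toOnePoint_inv_one_add_inv (a : ℝ≥0∞) :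
    (1 + a⁻¹)⁻¹.toOnePoint = (((1 + a)⁻¹).toOnePoint.map Neg.neg).map (· + 1) := by
  have h1 : (1 + a⁻¹)⁻¹ ≠ ⊤ := by simp
  have h2 : (1 + a)⁻¹ ≠ ⊤ := by simp
  have hsum := congrArg ENNReal.toReal (inv_one_add_inv_add_inv_one_add a)
  rw [toReal_add h1 h2, toReal_one] at hsum
  rw [toOnePoint_of_ne_top h1, toOnePoint_of_ne_top h2, OnePoint.map_some, OnePoint.map_some,
    OnePoint.coe_eq_coe]
  linarith

theorem OnePoint.map_add_one_map_neg_map_add_one (p : OnePoint ℝ) :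
    ((p.map (· + 1)).map Neg.neg).map (· + 1) = p.map Neg.neg := by
  induction p using OnePoint.rec <;> simp

/-- under the identification Φ, the map x corresponds to t ↦ t + 1
(with ∞ + 1 = ∞): Φ(ξ) + 1 = Φ(x(ξ)). -/
theorem Phi_x_is_translation
    (φ : Stream' Bool → ENNReal)
    (hφ0 : ∀ ξ, φ (Stream'.cons false ξ) = (1 + (φ ξ)⁻¹)⁻¹)
    (hφ1 : ∀ ξ, φ (Stream'.cons true ξ) = 1 + φ ξ)
    (Φ : Stream' Bool → OnePoint ℝ)
    (hΦ1 : ∀ ξ, Φ (Stream'.cons true ξ) =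
      if φ ξ = ⊤ then (∞ : OnePoint ℝ) else ((φ ξ).toReal : OnePoint ℝ))
    (hΦ0 : ∀ ξ, Φ (Stream'.cons false ξ) =
      if φ (Stream'.map not ξ) = ⊤ then (∞ : OnePoint ℝ)
      else ((-(φ (Stream'.map not ξ)).toReal : ℝ) : OnePoint ℝ))
    (x : Stream' Bool → Stream' Bool)
    (hx00 : ∀ η, x (Stream'.cons false (Stream'.cons false η)) = Stream'.cons false η)
    (hx01 : ∀ η, x (Stream'.cons false (Stream'.cons true η)) =
      Stream'.cons true (Stream'.cons false η))
    (hx1 : ∀ η, x (Stream'.cons true η) =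
      Stream'.cons true (Stream'.cons true η)) :
    ∀ ξ : Stream' Bool,
      (∀ r : ℝ, Φ ξ = (r : OnePoint ℝ) → Φ (x ξ) = ((r + 1 : ℝ) : OnePoint ℝ)) ∧
      (Φ ξ = (∞ : OnePoint ℝ) → Φ (x ξ) = (∞ : OnePoint ℝ)) := by
  have hφ : SternBrocot.SatisfiesStep φ := fun b ξ => by cases b; exacts [hφ0 ξ, hφ1 ξ]
  have hΦ1' : ∀ ξ, Φ (Stream'.cons true ξ) = (φ ξ).toOnePoint := hΦ1
  have hΦ0' : ∀ ξ, Φ (Stream'.cons false ξ) = (φ (ξ.map not)).toOnePoint.map Neg.neg := by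
    intro ξ
    rw [hΦ0, toOnePoint]
    split_ifs <;> rfl
  have hshift : ∀ ξ, Φ (x ξ) = (Φ ξ).map (· + 1) := by
    intro ξ
    obtain ⟨b, c, η, rfl⟩ : ∃ b c η, ξ = Stream'.cons b (Stream'.cons c η) :=
      ⟨_, _, _, by rw [Stream'.eta, Stream'.eta]⟩
    cases b
    · cases c
      · rw [hx00, hΦ0', hΦ0', Stream'.map_cons, Bool.not_false, hφ1, toOnePoint_one_add,
          OnePoint.map_add_one_map_neg_map_add_one]
      · rw [hx01, hΦ1', hΦ0', Stream'.map_cons, Bool.not_true, hφ0, hφ0, hφ.apply_map_not,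
          inv_inv, toOnePoint_inv_one_add_inv]
    · rw [hx1, hΦ1', hΦ1', hφ1, toOnePoint_one_add]
  exact fun ξ => ⟨fun r hr => by rw [hshift, hr]; rfl, fun h => by rw [hshift, h]; rfl⟩
end

section
/- Under the identification Φ, the localized doubling map y_{10} corresponds to the projective map c(t) = 2t/(1+t) on [0,1] extended by the identity: for every infinite binary sequence ξ, c(Φ(ξ)) = Φ(y_{10}(ξ)), where c(t) = 2t/(1+t) for 0 ≤ t ≤ 1 and c(t) = t otherwise. -/
/-!
Let `ℕ`-matrices act on `[0, ∞]` by Möbius maps and put `M₀ = !![1, 0; 1, 1]`,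
`M₁ = !![1, 1; 0, 1]`, so that `φ (b :: ξ) = M_b • φ ξ`. The equations of `y` and `z` say that
`(φ ∘ y, φ ∘ z)` solves a system `V s = M s • V (t s)` with unimodular `M s ≠ 1`, and so does
`(2 φ, φ / 2)`, since `diag(2, 1)` intertwines the matrices involved. Such a system has at most
one solution: after `n` steps the product `P = !![a, b; c, d]` of the matrices has
`(a + c) (b + d) > n`, and `x ↦ (1 + P • x)⁻¹` maps `[0, ∞]` into the Farey interval
`[c / (a + c), d / (b + d)]`, of length `1 / ((a + c) (b + d))`. Hence `φ (y η) = 2 φ η`, and for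
`ξ = 10η`, with `t = Φ ξ = φ η / (1 + φ η)`, we get `Φ (y₁₀ ξ) = 2 φ η / (1 + 2 φ η) = c t`.
Elsewhere `y₁₀` is the identity and `Φ ξ ∉ (0, 1)`, where `c` is the identity as well.
-/

open OnePoint

open scoped ENNReal NNReal

-- At `⊤` the affine formula would give the junk value `⊤ / ⊤ = 0`, hence the limit `a / c`.
noncomputable def mobius (M : Matrix (Fin 2) (Fin 2) ℕ) (x : ℝ≥0∞) : ℝ≥0∞ :=
  if x = ⊤ then (M 0 0 : ℝ≥0∞) / M 1 0 else (M 0 0 * x + M 0 1) / (M 1 0 * x + M 1 1)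

section Mobius

variable {M N : Matrix (Fin 2) (Fin 2) ℕ}

@[simp] lemma mobius_top (M : Matrix (Fin 2) (Fin 2) ℕ) : mobius M ⊤ = M 0 0 / M 1 0 :=
  if_pos rfl

lemma mobius_coe (hM : M 1 1 ≠ 0) (x : ℝ≥0) :
    mobius M x = ((M 0 0 * x + M 0 1) / (M 1 0 * x + M 1 1) : ℝ≥0) := by
  rw [mobius, if_neg ENNReal.coe_ne_top, ENNReal.coe_div (by positivity)]
  push_cast; rfl

lemma toReal_mobius (hM : M 1 1 ≠ 0) {x : ℝ≥0∞} (hx : x ≠ ⊤) :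
    (mobius M x).toReal = (M 0 0 * x.toReal + M 0 1) / (M 1 0 * x.toReal + M 1 1) := by
  lift x to ℝ≥0 using hx
  rw [mobius_coe hM, ENNReal.coe_toReal, ENNReal.coe_toReal]
  push_cast; rfl

@[simp] lemma mobius_one (x : ℝ≥0∞) : mobius 1 x = x := by
  rcases eq_or_ne x ⊤ with rfl | hx
  · simp
  · simp [mobius, hx]

lemma mobius_mobius (hM : M 1 1 ≠ 0) (hN₀ : N 0 0 ≠ 0) (hN₁ : N 1 1 ≠ 0) (x : ℝ≥0∞) :
    mobius M (mobius N x) = mobius (M * N) x := by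
  have hMN : (M * N) 1 1 ≠ 0 := by simp [Matrix.mul_apply, hM, hN₁]
  rcases eq_or_ne x ⊤ with rfl | hx
  · rcases eq_or_ne (N 1 0) 0 with hc | hc
    · have h : (M * N) 0 0 = M 0 0 * N 0 0 ∧ (M * N) 1 0 = M 1 0 * N 0 0 := by
        simp [Matrix.mul_apply, hc]
      simp only [mobius_top, h, hc, Nat.cast_mul, CharP.cast_eq_zero,
        ENNReal.div_zero (Nat.cast_ne_zero.2 hN₀)]
      rw [ENNReal.mul_div_mul_right _ _ (by simpa) (by simp)]
    · rw [mobius_top, ← ENNReal.coe_natCast, ← ENNReal.coe_natCast,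
        ← ENNReal.coe_div (by simpa), mobius_coe hM, mobius_top, ← ENNReal.coe_natCast,
        ← ENNReal.coe_natCast, ← ENNReal.coe_div (by simp [Matrix.mul_apply, hM, hc]),
        ENNReal.coe_inj]
      simp only [Matrix.mul_apply, Fin.sum_univ_two, Nat.cast_add, Nat.cast_mul]
      have : (N 1 0 : ℝ≥0) ≠ 0 := by simpa
      field_simp
  · lift x to ℝ≥0 using hx
    rw [mobius_coe hN₁, mobius_coe hM, mobius_coe hMN, ENNReal.coe_inj]
    simp only [Matrix.mul_apply, Fin.sum_univ_two, Nat.cast_add, Nat.cast_mul]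
    have : (N 1 0 * x + N 1 1 : ℝ≥0) ≠ 0 := by positivity
    field_simp
    ring

lemma toReal_mobius_mem_Icc (hdet : N 0 1 * N 1 0 = N 0 0 * N 1 1 + 1) (hc : N 1 0 ≠ 0)
    (hd : N 1 1 ≠ 0) (x : ℝ≥0∞) :
    (mobius N x).toReal ∈ Set.Icc (N 0 0 / N 1 0 : ℝ) (N 0 1 / N 1 1) := by
  have hdet' : (N 0 1 * N 1 0 : ℝ) = N 0 0 * N 1 1 + 1 := by exact_mod_cast hdet
  have hc' : (0 : ℝ) < N 1 0 := by positivity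
  have hd' : (0 : ℝ) < N 1 1 := by positivity
  rcases eq_or_ne x ⊤ with rfl | hx
  · rw [mobius_top, ENNReal.toReal_div, ENNReal.toReal_natCast, ENNReal.toReal_natCast]
    refine ⟨le_rfl, ?_⟩
    rw [div_le_div_iff₀ hc' hd']
    linarith
  · have ht : 0 ≤ x.toReal := ENNReal.toReal_nonneg
    rw [toReal_mobius hd hx, Set.mem_Icc, div_le_div_iff₀ hc' (by positivity),
      div_le_div_iff₀ (by positivity) hd']
    constructor <;> nlinarith

lemma inv_one_add_eq_mobius (x : ℝ≥0∞) : (1 + x)⁻¹ = mobius !![0, 1; 1, 1] x := by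
  rcases eq_or_ne x ⊤ with rfl | hx
  · simp
  · lift x to ℝ≥0 using hx
    rw [mobius_coe (by simp), ← ENNReal.coe_one, ← ENNReal.coe_add,
      ← ENNReal.coe_inv (by positivity), ENNReal.coe_inj]
    simp [add_comm]

lemma inv_one_add_inv_eq_mobius (x : ℝ≥0∞) : (1 + x⁻¹)⁻¹ = mobius !![1, 0; 1, 1] x := by
  rcases eq_or_ne x ⊤ with rfl | hx
  · simp
  rcases eq_or_ne x 0 with rfl | hx₀
  · simp [mobius]
  lift x to ℝ≥0 using hx
  replace hx₀ : x ≠ 0 := by exact_mod_cast hx₀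
  rw [mobius_coe (by simp), ← ENNReal.coe_inv hx₀, ← ENNReal.coe_one, ← ENNReal.coe_add,
    ← ENNReal.coe_inv (by positivity), ENNReal.coe_inj]
  simp
  field_simp

lemma one_add_eq_mobius (x : ℝ≥0∞) : 1 + x = mobius !![1, 1; 0, 1] x := by
  rcases eq_or_ne x ⊤ with rfl | hx
  · simp
  · lift x to ℝ≥0 using hx
    rw [mobius_coe (by simp)]
    simp [add_comm]

lemma two_mul_eq_mobius (x : ℝ≥0∞) : 2 * x = mobius !![2, 0; 0, 1] x := by
  rcases eq_or_ne x ⊤ with rfl | hx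
  · simp [ENNReal.div_zero two_ne_zero]
  · lift x to ℝ≥0 using hx
    rw [mobius_coe (by simp)]
    simp

lemma div_two_eq_mobius (x : ℝ≥0∞) : x / 2 = mobius !![1, 0; 0, 2] x := by
  rcases eq_or_ne x ⊤ with rfl | hx
  · simp [ENNReal.top_div_of_ne_top]
  · lift x to ℝ≥0 using hx
    rw [mobius_coe (by simp)]
    simp

end Mobius

def Unimodular (M : Matrix (Fin 2) (Fin 2) ℕ) : Prop := (M.map ((↑) : ℕ → ℤ)).det = 1

def colSumProd (M : Matrix (Fin 2) (Fin 2) ℕ) : ℕ := (M 0 0 + M 1 0) * (M 0 1 + M 1 1)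

namespace Unimodular

variable {M N : Matrix (Fin 2) (Fin 2) ℕ}

lemma one : Unimodular 1 := by simp [Unimodular]

lemma mul (hM : Unimodular M) (hN : Unimodular N) : Unimodular (M * N) := by
  unfold Unimodular at *
  rw [← Nat.coe_castRingHom] at hM hN ⊢
  rw [Matrix.map_mul, Matrix.det_mul, hM, hN, one_mul]

lemma det_eq (hM : Unimodular M) : M 0 0 * M 1 1 = M 0 1 * M 1 0 + 1 := by
  rw [Unimodular, Matrix.det_fin_two] at hM
  simp only [Matrix.map_apply] at hM
  zify; linarith

lemma diag_ne_zero (hM : Unimodular M) : M 0 0 ≠ 0 ∧ M 1 1 ≠ 0 := by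
  have h := hM.det_eq
  exact ⟨by rintro h0; simp [h0] at h, by rintro h0; simp [h0] at h⟩

lemma one_lt_colSumProd (hM : Unimodular M) (hM1 : M ≠ 1) : 1 < colSumProd M := by
  have h := hM.det_eq
  have ha : 1 ≤ M 0 0 := Nat.one_le_iff_ne_zero.2 hM.diag_ne_zero.1
  have hd : 1 ≤ M 1 1 := Nat.one_le_iff_ne_zero.2 hM.diag_ne_zero.2
  by_contra hle
  have hp : M 0 0 + M 1 0 = 1 := by unfold colSumProd at hle; nlinarith
  have hq : M 0 1 + M 1 1 = 1 := by unfold colSumProd at hle; nlinarith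
  refine hM1 (Matrix.ext fun i j => ?_)
  fin_cases i <;> fin_cases j <;> simp <;> omega

lemma colSumProd_lt_colSumProd_mul (hM : Unimodular M) (hM1 : M ≠ 1) (hN : Unimodular N) :
    colSumProd N < colSumProd (M * N) := by
  have h := hM.one_lt_colSumProd hM1
  have hN' := hN.det_eq
  have hMN : colSumProd (M * N) = ((M 0 0 + M 1 0) * N 0 0 + (M 0 1 + M 1 1) * N 1 0) *
      ((M 0 0 + M 1 0) * N 0 1 + (M 0 1 + M 1 1) * N 1 1) := by
    simp only [colSumProd, Matrix.mul_apply, Fin.sum_univ_two]; ring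
  rw [hMN, colSumProd]
  unfold colSumProd at h
  generalize M 0 0 + M 1 0 = p, M 0 1 + M 1 1 = q at h ⊢
  have hp : 1 ≤ p := Nat.one_le_iff_ne_zero.2 (by rintro rfl; simp at h)
  have hq : 1 ≤ q := Nat.one_le_iff_ne_zero.2 (by rintro rfl; simp at h)
  nlinarith [Nat.mul_le_mul_right (N 0 0 * N 0 1) (Nat.mul_le_mul hp hp),
    Nat.mul_le_mul_right (N 1 0 * N 1 1) (Nat.mul_le_mul hq hq),
    Nat.mul_le_mul_right (N 0 0 * N 1 1) h, Nat.mul_le_mul_right (N 0 1 * N 1 0) h.le]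

lemma dist_toReal_inv_one_add_mobius_le (hM : Unimodular M) (x y : ℝ≥0∞) :
    dist (1 + mobius M x)⁻¹.toReal (1 + mobius M y)⁻¹.toReal ≤ (colSumProd M : ℝ)⁻¹ := by
  obtain ⟨ha, hd⟩ := hM.diag_ne_zero
  set N := !![M 1 0, M 1 1; M 0 0 + M 1 0, M 0 1 + M 1 1]
  have hN (z : ℝ≥0∞) : (1 + mobius M z)⁻¹ = mobius N z := by
    rw [inv_one_add_eq_mobius, mobius_mobius (by simp) ha hd, Matrix.eta_fin_two M,
      Matrix.mul_fin_two]
    simp [N]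
  have hdet : N 0 1 * N 1 0 = N 0 0 * N 1 1 + 1 := by simp [N]; linarith [hM.det_eq]
  rw [hN, hN]
  refine (Real.dist_le_of_mem_Icc (toReal_mobius_mem_Icc hdet (by simp [N, ha]) (by simp [N, hd]) x)
    (toReal_mobius_mem_Icc hdet (by simp [N, ha]) (by simp [N, hd]) y)).trans_eq ?_
  have hdet' : (N 0 1 * N 1 0 : ℝ) = N 0 0 * N 1 1 + 1 := by exact_mod_cast hdet
  have : (0 : ℝ) < N 1 0 := by simp [N]; positivity
  have : (0 : ℝ) < N 1 1 := by simp [N]; positivity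
  rw [colSumProd, Nat.cast_mul, show ((M 0 0 + M 1 0 : ℕ) : ℝ) = N 1 0 by simp [N],
    show ((M 0 1 + M 1 1 : ℕ) : ℝ) = N 1 1 by simp [N]]
  field_simp
  linarith

end Unimodular

section Uniqueness

variable {S : Type*} {V W : S → ℝ≥0∞}

lemma exists_mobius_chain
    (h : ∀ s, ∃ M t, Unimodular M ∧ M ≠ 1 ∧ V s = mobius M (V t) ∧ W s = mobius M (W t))
    (n : ℕ) (s : S) :
    ∃ P t, Unimodular P ∧ n < colSumProd P ∧ V s = mobius P (V t) ∧ W s = mobius P (W t) := by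
  induction n generalizing s with
  | zero => exact ⟨1, s, .one, by simp [colSumProd], by simp, by simp⟩
  | succ n ih =>
    obtain ⟨M, t, hM, hM1, hVs, hWs⟩ := h s
    obtain ⟨P, u, hP, hn, hVt, hWt⟩ := ih t
    have hcomp (x : ℝ≥0∞) : mobius M (mobius P x) = mobius (M * P) x :=
      mobius_mobius hM.diag_ne_zero.2 hP.diag_ne_zero.1 hP.diag_ne_zero.2 x
    refine ⟨M * P, u, hM.mul hP, ?_, by rw [hVs, hVt, hcomp], by rw [hWs, hWt, hcomp]⟩
    exact Nat.lt_of_le_of_lt hn (hM.colSumProd_lt_colSumProd_mul hM1 hP)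

theorem eq_of_forall_exists_mobius
    (h : ∀ s, ∃ M t, Unimodular M ∧ M ≠ 1 ∧ V s = mobius M (V t) ∧ W s = mobius M (W t)) :
    V = W := by
  funext s
  have hdist : ∀ ε > 0, dist (1 + V s)⁻¹.toReal (1 + W s)⁻¹.toReal ≤ ε := fun ε hε => by
    obtain ⟨n, hn⟩ := exists_nat_one_div_lt hε
    obtain ⟨P, t, hP, hnP, hV, hW⟩ := exists_mobius_chain h (n + 1) s
    rw [hV, hW]
    calc _ ≤ (colSumProd P : ℝ)⁻¹ := hP.dist_toReal_inv_one_add_mobius_le _ _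
      _ ≤ 1 / (n + 1) := by
        rw [one_div]; gcongr; exact_mod_cast hnP.le
      _ ≤ ε := hn.le
  have := eq_of_forall_dist_le hdist
  rwa [ENNReal.toReal_eq_toReal_iff' (by simp) (by simp), inv_inj,
    ENNReal.add_right_inj ENNReal.one_ne_top] at this

end Uniqueness

open Stream' (cons eta)

lemma Stream'.exists_eq_cons_cons {α : Type*} (ξ : Stream' α) :
    ∃ a b η, ξ = cons a (cons b η) :=
  ⟨_, _, _, by rw [eta, eta]⟩

lemma loc_of_take_ne {s : List Bool} {ξ : Stream' Bool} (f : Stream' Bool → Stream' Bool)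
    (h : Stream'.take s.length ξ ≠ s) : loc s f ξ = ξ :=
  if_neg h

lemma loc_append_s15 (s : List Bool) (f : Stream' Bool → Stream' Bool) (ξ : Stream' Bool) :
    loc s f (s ++ₛ ξ) = s ++ₛ f ξ := by
  rw [loc, Stream'.take_append_of_le_length _ _ _ le_rfl, List.take_length, if_pos rfl,
    Stream'.drop_append_stream]

theorem apply_doubling_eq_two_mul {φ : Stream' Bool → ℝ≥0∞}
    (hφ0 : ∀ ξ, φ (cons false ξ) = (1 + (φ ξ)⁻¹)⁻¹) (hφ1 : ∀ ξ, φ (cons true ξ) = 1 + φ ξ)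
    {y z : Stream' Bool → Stream' Bool}
    (hy00 : ∀ η, y (cons false (cons false η)) = cons false (y η))
    (hy01 : ∀ η, y (cons false (cons true η)) = cons true (cons false (z η)))
    (hy1 : ∀ η, y (cons true η) = cons true (cons true (y η)))
    (hz0 : ∀ η, z (cons false η) = cons false (cons false (z η)))
    (hz10 : ∀ η, z (cons true (cons false η)) = cons false (cons true (y η)))
    (hz11 : ∀ η, z (cons true (cons true η)) = cons true (z η)) (η : Stream' Bool) :
    φ (y η) = 2 * φ η := by
  simp only [inv_one_add_inv_eq_mobius] at hφ0
  simp only [one_add_eq_mobius] at hφ1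
  suffices Sum.elim (φ ∘ y) (φ ∘ z) = Sum.elim (fun η => 2 * φ η) (fun η => φ η / 2) from
    congrFun this (.inl η)
  apply eq_of_forall_exists_mobius
  -- One transition per case `y·00, y·01, y·10, y·11, z·00, z·01, z·10, z·11`, read off from
  -- the equations of `y` and `z`.
  rintro (ξ | ξ) <;> obtain ⟨_ | _, _ | _, ζ, rfl⟩ := Stream'.exists_eq_cons_cons ξ <;>
    [refine ⟨!![1, 0; 1, 1], .inl ζ, ?_⟩;
     refine ⟨!![2, 1; 1, 1], .inr ζ, ?_⟩;
     refine ⟨!![1, 2; 0, 1], .inl (cons false ζ), ?_⟩;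
     refine ⟨!![1, 2; 0, 1], .inl (cons true ζ), ?_⟩;
     refine ⟨!![1, 0; 2, 1], .inr (cons false ζ), ?_⟩;
     refine ⟨!![1, 0; 2, 1], .inr (cons true ζ), ?_⟩;
     refine ⟨!![1, 1; 1, 2], .inl ζ, ?_⟩;
     refine ⟨!![1, 1; 0, 1], .inr ζ, ?_⟩] <;>
    exact ⟨by simp [Unimodular, Matrix.det_fin_two], by decide,
      by simp [hy00, hy01, hy1, hz0, hz10, hz11, hφ0, hφ1, mobius_mobius],
      by simp [hφ0, hφ1, two_mul_eq_mobius, div_two_eq_mobius, mobius_mobius]⟩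

lemma toReal_inv_one_add_inv_le_one (x : ℝ≥0∞) : ((1 + x⁻¹)⁻¹).toReal ≤ 1 :=
  ENNReal.toReal_le_of_le_ofReal zero_le_one (by simp)

lemma toReal_inv_one_add_inv_two_mul (u : ℝ≥0∞) :
    ((1 + (2 * u)⁻¹)⁻¹).toReal = 2 * ((1 + u⁻¹)⁻¹).toReal / (1 + ((1 + u⁻¹)⁻¹).toReal) := by
  have h : (1 + (2 * u)⁻¹)⁻¹ = mobius !![2, 0; 1, 1] ((1 + u⁻¹)⁻¹) := by
    simp only [inv_one_add_inv_eq_mobius, two_mul_eq_mobius]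
    simp [mobius_mobius]
  rw [h, toReal_mobius (by simp) (ne_top_of_le_ne_top ENNReal.one_ne_top
    (ENNReal.inv_le_one.2 le_self_add))]
  simp [add_comm]

lemma ite_eq_self_of_nonpos_or_one_le {r : ℝ} (hr : r ≤ 0 ∨ 1 ≤ r) :
    (if 0 ≤ r ∧ r ≤ 1 then 2 * r / (1 + r) else r) = r := by
  split_ifs with h
  · obtain rfl | rfl : r = 0 ∨ r = 1 := by rcases hr with hr | hr <;> [left; right] <;> linarith
    all_goals norm_num
  · rfl

section Phi

variable {φ : Stream' Bool → ℝ≥0∞} {Φ : Stream' Bool → OnePoint ℝ}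

lemma nonpos_of_Phi_cons_false
    (hΦ0 : ∀ ξ, Φ (cons false ξ) =
      if φ (Stream'.map not ξ) = ⊤ then (∞ : OnePoint ℝ)
      else ((-(φ (Stream'.map not ξ)).toReal : ℝ) : OnePoint ℝ))
    {ξ : Stream' Bool} {r : ℝ} (hr : Φ (cons false ξ) = r) : r ≤ 0 := by
  rw [hΦ0] at hr
  split_ifs at hr
  · exact absurd hr (OnePoint.infty_ne_coe r)
  · rw [← OnePoint.coe_eq_coe.1 hr]; simp

lemma one_le_of_Phi_cons_true_cons_true (hφ1 : ∀ ξ, φ (cons true ξ) = 1 + φ ξ)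
    (hΦ1 : ∀ ξ, Φ (cons true ξ) =
      if φ ξ = ⊤ then (∞ : OnePoint ℝ) else ((φ ξ).toReal : OnePoint ℝ))
    {ξ : Stream' Bool} {r : ℝ} (hr : Φ (cons true (cons true ξ)) = r) : 1 ≤ r := by
  rw [hΦ1] at hr
  split_ifs at hr with h
  · exact absurd hr (OnePoint.infty_ne_coe r)
  · rw [← OnePoint.coe_eq_coe.1 hr, hφ1] at *
    simpa using ENNReal.toReal_mono h le_self_add

lemma Phi_cons_true_cons_false (hφ0 : ∀ ξ, φ (cons false ξ) = (1 + (φ ξ)⁻¹)⁻¹)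
    (hΦ1 : ∀ ξ, Φ (cons true ξ) =
      if φ ξ = ⊤ then (∞ : OnePoint ℝ) else ((φ ξ).toReal : OnePoint ℝ))
    (ξ : Stream' Bool) : Φ (cons true (cons false ξ)) = ((1 + (φ ξ)⁻¹)⁻¹).toReal := by
  rw [hΦ1, hφ0, if_neg (ne_top_of_le_ne_top ENNReal.one_ne_top (ENNReal.inv_le_one.2 le_self_add))]

end Phi

/-- under the identification Φ, the localized doubling map y_{10}
corresponds to c(t) = 2t/(1+t) on [0,1] extended by the identity. -/
theorem Phi_y10_is_c
    (φ : Stream' Bool → ENNReal)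
    (hφ0 : ∀ ξ, φ (Stream'.cons false ξ) = (1 + (φ ξ)⁻¹)⁻¹)
    (hφ1 : ∀ ξ, φ (Stream'.cons true ξ) = 1 + φ ξ)
    (Φ : Stream' Bool → OnePoint ℝ)
    (hΦ1 : ∀ ξ, Φ (Stream'.cons true ξ) =
      if φ ξ = ⊤ then (∞ : OnePoint ℝ) else ((φ ξ).toReal : OnePoint ℝ))
    (hΦ0 : ∀ ξ, Φ (Stream'.cons false ξ) =
      if φ (Stream'.map not ξ) = ⊤ then (∞ : OnePoint ℝ)
      else ((-(φ (Stream'.map not ξ)).toReal : ℝ) : OnePoint ℝ))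
    (y z : Stream' Bool → Stream' Bool)
    (hy00 : ∀ η, y (Stream'.cons false (Stream'.cons false η)) =
      Stream'.cons false (y η))
    (hy01 : ∀ η, y (Stream'.cons false (Stream'.cons true η)) =
      Stream'.cons true (Stream'.cons false (z η)))
    (hy1 : ∀ η, y (Stream'.cons true η) =
      Stream'.cons true (Stream'.cons true (y η)))
    (hz0 : ∀ η, z (Stream'.cons false η) =
      Stream'.cons false (Stream'.cons false (z η)))
    (hz10 : ∀ η, z (Stream'.cons true (Stream'.cons false η)) =
      Stream'.cons false (Stream'.cons true (y η)))
    (hz11 : ∀ η, z (Stream'.cons true (Stream'.cons true η)) =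
      Stream'.cons true (z η)) :
    ∀ ξ : Stream' Bool,
      (∀ r : ℝ, Φ ξ = (r : OnePoint ℝ) →
        Φ (loc [true, false] y ξ) =
          ((if 0 ≤ r ∧ r ≤ 1 then 2 * r / (1 + r) else r : ℝ) : OnePoint ℝ)) ∧
      (Φ ξ = (∞ : OnePoint ℝ) → Φ (loc [true, false] y ξ) = (∞ : OnePoint ℝ)) := by
  have hdouble := apply_doubling_eq_two_mul hφ0 hφ1 hy00 hy01 hy1 hz0 hz10 hz11
  have hΦ10 := Phi_cons_true_cons_false hφ0 hΦ1
  intro ξ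
  obtain ⟨_ | _, _ | _, η, rfl⟩ := Stream'.exists_eq_cons_cons ξ
  iterate 2
    rw [loc_of_take_ne y (by simp [Stream'.take])]
    exact ⟨fun r hr => by
      rw [hr, ite_eq_self_of_nonpos_or_one_le (.inl (nonpos_of_Phi_cons_false hΦ0 hr))], id⟩
  · rw [show loc [true, false] y (cons true (cons false η)) = cons true (cons false (y η)) from
      loc_append_s15 _ _ _, hΦ10, hΦ10]
    refine ⟨fun r hr => ?_, fun h => absurd h (OnePoint.coe_ne_infty _)⟩
    rw [← OnePoint.coe_eq_coe.1 hr, if_pos ⟨ENNReal.toReal_nonneg, toReal_inv_one_add_inv_le_one _⟩,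
      hdouble, toReal_inv_one_add_inv_two_mul]
  · rw [loc_of_take_ne y (by simp [Stream'.take])]
    exact ⟨fun r hr => by
      rw [hr, ite_eq_self_of_nonpos_or_one_le
        (.inr (one_le_of_Phi_cons_true_cons_true hφ1 hΦ1 hr))], id⟩
end
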